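/- Let G be a 2-edge-connected finite simple graph, let L = ((u_1, v_1), …, (u_l, v_l)) be an edge DFS of G, and let S be a nonempty proper subset of the vertex set of G. Then there exists an index i ∈ {1, …, l} with u_i ∉ S and v_i ∈ S. -/

import Mathlib

/-- `Xset G L j w` is the set of edges of `G` incident to `w` that are not
among the edges of the first `j + 1` items of `L` (0-based: items `0, …, j`). -/
def Xset {V : Type*} (G : SimpleGraph V) (L : List (V × V)) (j : ℕ) (w : V) :
    Set (Sym2 V) :=
  {e | e ∈ G.edgeSet ∧ w ∈ e ∧
    ∀ i : ℕ, ∀ hi : i < L.length, i ≤ j → e ≠ Sym2.mk.uncurry (L[i]'hi)}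

/-- `L = ((u_0, v_0), …, (u_{l-1}, v_{l-1}))` is an edge DFS of `G`:
(i) each `{u_j, v_j}` is an edge of `G`;
(ii) every edge of `G` occurs as some `{u_j, v_j}`;
(iii) after traversing items `0, …, j`, if some edge incident to `v_j` is still
untraversed then the next item traverses such an edge starting at `v_j`;
otherwise `L` backtracks to the last previously visited vertex `v_{j'}` that
still has an untraversed incident edge and traverses such an edge from it. -/
def IsEdgeDFS {V : Type*} (G : SimpleGraph V) (L : List (V × V)) : Prop :=
  (∀ i : ℕ, ∀ hi : i < L.length, G.Adj (L[i]'hi).1 (L[i]'hi).2) ∧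
  (∀ e ∈ G.edgeSet, ∃ i : ℕ, ∃ hi : i < L.length, e = Sym2.mk.uncurry (L[i]'hi)) ∧
  (∀ j : ℕ, ∀ hj : j + 1 < L.length,
    (Xset G L j (L[j]'(by omega)).2 ≠ ∅ →
      (L[j + 1]'hj).1 = (L[j]'(by omega)).2 ∧
      Sym2.mk.uncurry (L[j + 1]'hj) ∈ Xset G L j (L[j]'(by omega)).2) ∧
    (Xset G L j (L[j]'(by omega)).2 = ∅ →
      ∃ j' : ℕ, ∃ hj' : j' < j,
        Xset G L j (L[j']'(by omega)).2 ≠ ∅ ∧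
        (∀ j'' : ℕ, ∀ _h1 : j' < j'', ∀ _h2 : j'' < j,
          Xset G L j (L[j'']'(by omega)).2 = ∅) ∧
        (L[j + 1]'hj).1 = (L[j']'(by omega)).2 ∧
        Sym2.mk.uncurry (L[j + 1]'hj) ∈ Xset G L j (L[j']'(by omega)).2))

/-- A finite simple graph is 2-edge-connected if it has at least 2 vertices,
is connected, and deleting any single edge leaves it connected. -/
def TwoEdgeConnected {V : Type*} [Fintype V] (G : SimpleGraph V) : Prop :=
  2 ≤ Fintype.card V ∧ G.Connected ∧
    ∀ e ∈ G.edgeSet, (G.deleteEdges {e}).Connected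

private lemma walk_cross {V : Type*} {H : SimpleGraph V} {P Q : V → Prop}
    (hclosed : ∀ z z', P z → H.Adj z z' → ¬ Q z' → P z')
    (hdisj : ∀ z, P z → ¬ Q z) :
    ∀ {a b : V}, H.Walk a b → P a → Q b → ∃ y x, H.Adj y x ∧ P y ∧ Q x := by
  intro a b w
  induction w with
  | nil => intro hp hq; exact absurd hq (hdisj _ hp)
  | @cons a c b h w ih =>
    intro hp hq
    by_cases hc : Q c
    · exact ⟨a, c, h, hp, hc⟩
    · exact ih (hclosed a c hp h hc) hq

/-- If `G` is 2-edge-connected, `L` is an edge DFS of `G`, and `S` is a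
nonempty proper subset of the vertex set, then some item `(u_i, v_i)` of `L`
has `u_i ∉ S` and `v_i ∈ S`. -/
theorem edgeDFS_enters_every_set {V : Type*} [Fintype V]
    (G : SimpleGraph V) (hG : TwoEdgeConnected G) (L : List (V × V))
    (hL : IsEdgeDFS G L) (S : Set V) (hS : S.Nonempty) (hSne : S ≠ Set.univ) :
    ∃ i : ℕ, ∃ hi : i < L.length, (L[i]'hi).1 ∉ S ∧ (L[i]'hi).2 ∈ S := by
    classical
  obtain ⟨hcard, hconn, hdel⟩ := hG
  obtain ⟨hadj, hcover, hstep⟩ := hL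
  by_contra hcon
  push_neg at hcon
  -- no entering arc
  have henter : ∀ i : ℕ, ∀ hi : i < L.length, (L[i]'hi).2 ∈ S → (L[i]'hi).1 ∈ S := by
    intro i hi hv
    by_contra hu
    exact (hcon i hi hu) hv
  -- every u_i with i > 0 is an earlier v_j
  have hUprev : ∀ i : ℕ, ∀ hi : i < L.length, 0 < i →
      ∃ j : ℕ, ∃ hj : j < L.length, j < i ∧ (L[i]'hi).1 = (L[j]'hj).2 := by
    intro i hi hpos
    obtain ⟨j, rfl⟩ : ∃ j, i = j + 1 := ⟨i - 1, by omega⟩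
    have hj : j < L.length := by omega
    by_cases hX : Xset G L j (L[j]'hj).2 = ∅
    · obtain ⟨j', hj', _, _, hu, _⟩ := (hstep j hi).2 hX
      exact ⟨j', by omega, by omega, hu⟩
    · exact ⟨j, hj, by omega, ((hstep j hi).1 hX).1⟩
  -- L is nonempty
  have hlen : 0 < L.length := by
    have : Nontrivial V := Fintype.one_lt_card_iff_nontrivial.mp (by omega)
    obtain ⟨s, hs⟩ := hS
    obtain ⟨b, hb⟩ := exists_ne s
    obtain ⟨w⟩ := hconn.preconnected b s
    have hedge : ∃ a c, G.Adj a c := by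
      cases w with
      | nil => exact absurd rfl hb
      | cons h _ => exact ⟨_, _, h⟩
    obtain ⟨a, c, hac⟩ := hedge
    obtain ⟨i, hi, _⟩ := hcover s(a, c) (G.mem_edgeSet.mpr hac)
    omega
  by_cases hu0 : (L[0]'hlen).1 ∈ S
  case neg =>
    -- Case A: DFS starts outside S; then no arc ever touches S, contradiction
    have hnov : ∀ i : ℕ, ∀ hi : i < L.length, (L[i]'hi).2 ∉ S := by
      intro i
      induction i using Nat.strong_induction_on with
      | _ i IH =>
        intro hi hv
        have hu : (L[i]'hi).1 ∈ S := henter i hi hv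
        rcases Nat.eq_zero_or_pos i with h0 | hpos
        · subst h0; exact hu0 hu
        · obtain ⟨j, hj, hji, heq⟩ := hUprev i hi hpos
          exact IH j hji hj (heq ▸ hu)
    have hnou : ∀ i : ℕ, ∀ hi : i < L.length, (L[i]'hi).1 ∉ S := by
      intro i hi hu
      rcases Nat.eq_zero_or_pos i with h0 | hpos
      · subst h0; exact hu0 hu
      · obtain ⟨j, hj, _, heq⟩ := hUprev i hi hpos
        exact hnov j hj (heq ▸ hu)
    obtain ⟨s, hs⟩ := hS
    have : Nontrivial V := Fintype.one_lt_card_iff_nontrivial.mp (by omega)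
    obtain ⟨b, hb⟩ := exists_ne s
    obtain ⟨w⟩ := hconn.preconnected s b
    have hedge : ∃ c, G.Adj s c := by
      cases w with
      | nil => exact absurd rfl hb
      | cons h _ => exact ⟨_, h⟩
    obtain ⟨c, hsc⟩ := hedge
    obtain ⟨i, hi, hf⟩ := hcover s(s, c) (G.mem_edgeSet.mpr hsc)
    have hf' : s(s, c) = s((L[i]'hi).1, (L[i]'hi).2) := by exact hf
    rcases Sym2.eq_iff.mp hf' with ⟨h1, _⟩ | ⟨h1, _⟩
    · exact hnou i hi (by rw [← h1]; exact hs)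
    · exact hnov i hi (by rw [← h1]; exact hs)
  case pos =>
    -- Case B: DFS starts inside S
    -- there is a crossing arc: u ∈ S, v ∉ S
    have hcross : ∃ i : ℕ, ∃ hi : i < L.length, (L[i]'hi).1 ∈ S ∧ (L[i]'hi).2 ∉ S := by
      obtain ⟨s, hs⟩ := hS
      obtain ⟨w0, hw0⟩ := (Set.ne_univ_iff_exists_notMem S).mp hSne
      obtain ⟨w⟩ := hconn.preconnected w0 s
      obtain ⟨y, x, hyx, hyS, hxS⟩ :=
        walk_cross (P := fun z => z ∉ S) (Q := fun z => z ∈ S)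
          (fun _ _ _ _ h => h) (fun _ h => h) w hw0 hs
      obtain ⟨i, hi, hf⟩ := hcover s(y, x) (G.mem_edgeSet.mpr hyx)
      have hf' : s(y, x) = s((L[i]'hi).1, (L[i]'hi).2) := by exact hf
      rcases Sym2.eq_iff.mp hf' with ⟨h1, h2⟩ | ⟨h1, h2⟩
      · exact absurd (henter i hi (by rw [← h2]; exact hxS)) (by rw [← h1]; exact hyS)
      · exact ⟨i, hi, by rw [← h2]; exact hxS, by rw [← h1]; exact hyS⟩
    set k := Nat.find hcross with hkdef
    obtain ⟨hk, hukS, hvkS⟩ := Nat.find_spec hcross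
    have hkmin : ∀ i, i < k → ∀ hi : i < L.length,
        ¬((L[i]'hi).1 ∈ S ∧ (L[i]'hi).2 ∉ S) := by
      intro i hik hi h
      exact Nat.find_min hcross hik ⟨hi, h⟩
    -- everything before k lies inside S
    have h4 : ∀ i : ℕ, ∀ hi : i < L.length, i < k →
        (L[i]'hi).1 ∈ S ∧ (L[i]'hi).2 ∈ S := by
      intro i
      induction i using Nat.strong_induction_on with
      | _ i IH =>
        intro hi hik
        have hu : (L[i]'hi).1 ∈ S := by
          rcases Nat.eq_zero_or_pos i with h0 | hpos
          · subst h0; exact hu0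
          · obtain ⟨j, hj, hji, heq⟩ := hUprev i hi hpos
            exact heq ▸ (IH j hji hj (by omega)).2
        refine ⟨hu, ?_⟩
        by_contra hv
        exact hkmin i hik hi ⟨hu, hv⟩
    have hek : Sym2.mk.uncurry (L[k]'hk) ∈ G.edgeSet := by
      have : Sym2.mk.uncurry (L[k]'hk) = s((L[k]'hk).1, (L[k]'hk).2) := rfl
      rw [this]
      exact G.mem_edgeSet.mpr (hadj k hk)
    have hdelk := hdel _ hek
    -- the crux: a bounded traversal-closure contradiction
    have crux : ∀ B : ℕ, k ≤ B →
        (∀ i : ℕ, ∀ hi : i < L.length, k < i → i ≤ B →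
          (L[i]'hi).1 ∉ S ∧ (L[i]'hi).2 ∉ S) →
        (∀ m : ℕ, ∀ hm : m < L.length, k ≤ m → m ≤ B →
          ∀ f ∈ G.edgeSet, (L[m]'hm).2 ∈ f →
            ∃ i : ℕ, ∃ hi : i < L.length, i ≤ B ∧ f = Sym2.mk.uncurry (L[i]'hi)) →
        False := by
      intro B hkB hIH hcov
      set e := Sym2.mk.uncurry (L[k]'hk) with hedef
      have hclosed : ∀ z z',
          (z ∉ S ∧ ∃ m : ℕ, ∃ hm : m < L.length, k ≤ m ∧ m ≤ B ∧ (L[m]'hm).2 = z) →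
          (G.deleteEdges {e}).Adj z z' → ¬ (z' ∈ S) →
          (z' ∉ S ∧ ∃ m : ℕ, ∃ hm : m < L.length, k ≤ m ∧ m ≤ B ∧ (L[m]'hm).2 = z') := by
        rintro z z' ⟨hzS, m, hm, hkm, hmB, hvz⟩ hadj' hz'S
        have hGadj : G.Adj z z' := by
          rw [SimpleGraph.deleteEdges_adj] at hadj'
          exact hadj'.1
        obtain ⟨i, hi, hiB, hf⟩ := hcov m hm hkm hmB s(z, z')
          (G.mem_edgeSet.mpr hGadj) (hvz ▸ Sym2.mem_mk_left z z')
        have hf' : s(z, z') = s((L[i]'hi).1, (L[i]'hi).2) := by exact hf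
        refine ⟨hz'S, ?_⟩
        rcases Sym2.eq_iff.mp hf' with ⟨h1, h2⟩ | ⟨h1, h2⟩
        · -- z' = v_i
          have hik : k ≤ i := by
            by_contra h
            push_neg at h
            exact hz'S (by rw [h2]; exact (h4 i hi h).2)
          exact ⟨i, hi, hik, hiB, h2.symm⟩
        · -- z' = u_i
          have hpos : 0 < i := by
            rcases Nat.eq_zero_or_pos i with h0 | hpos
            · exfalso; subst h0; exact hz'S (by rw [h2]; exact hu0)
            · exact hpos
          obtain ⟨j2, hj2, hj2i, heq⟩ := hUprev i hi hpos
          have hz'v : (L[j2]'hj2).2 = z' := by rw [← heq, ← h2]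
          have hj2k : k ≤ j2 := by
            by_contra h
            push_neg at h
            exact hz'S (hz'v ▸ (h4 j2 hj2 h).2)
          exact ⟨j2, hj2, hj2k, by omega, hz'v⟩
      have hPvk : (L[k]'hk).2 ∉ S ∧
          ∃ m : ℕ, ∃ hm : m < L.length, k ≤ m ∧ m ≤ B ∧ (L[m]'hm).2 = (L[k]'hk).2 :=
        ⟨hvkS, k, hk, le_refl k, hkB, rfl⟩
      obtain ⟨w⟩ := hdelk.preconnected (L[k]'hk).2 (L[k]'hk).1
      obtain ⟨y, x, hyx, ⟨hyS, m, hm, hkm, hmB, hvy⟩, hxS⟩ :=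
        walk_cross (P := fun z => z ∉ S ∧
            ∃ m : ℕ, ∃ hm : m < L.length, k ≤ m ∧ m ≤ B ∧ (L[m]'hm).2 = z)
          (Q := fun z => z ∈ S) hclosed (fun _ h => h.1) w hPvk hukS
      rw [SimpleGraph.deleteEdges_adj] at hyx
      obtain ⟨hGyx, hne⟩ := hyx
      rw [Set.mem_singleton_iff] at hne
      obtain ⟨i, hi, hiB, hf⟩ := hcov m hm hkm hmB s(y, x)
        (G.mem_edgeSet.mpr hGyx) (hvy ▸ Sym2.mem_mk_left y x)
      have hf' : s(y, x) = s((L[i]'hi).1, (L[i]'hi).2) := by exact hf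
      rcases lt_trichotomy i k with hik | hik | hik
      · obtain ⟨hu4, hv4⟩ := h4 i hi hik
        rcases Sym2.eq_iff.mp hf' with ⟨h1, _⟩ | ⟨h1, _⟩
        · exact hyS (by rw [h1]; exact hu4)
        · exact hyS (by rw [h1]; exact hv4)
      · subst hik
        exact hne hf
      · obtain ⟨hu4, hv4⟩ := hIH i hi hik hiB
        rcases Sym2.eq_iff.mp hf' with ⟨_, h2⟩ | ⟨_, h2⟩
        · exact hv4 (by rw [← h2]; exact hxS)
        · exact hu4 (by rw [← h2]; exact hxS)
    -- main induction: from time k on, the walk stays outside S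
    have hmain : ∀ t : ℕ, ∀ ht : t < L.length, k ≤ t →
        (L[t]'ht).2 ∉ S ∧ (k < t → (L[t]'ht).1 ∉ S) := by
      intro t
      induction t using Nat.strong_induction_on with
      | _ t IH =>
        intro ht hkt
        rcases eq_or_lt_of_le hkt with h | hklt
        · subst h
          exact ⟨hvkS, fun h => absurd h (lt_irrefl _)⟩
        · obtain ⟨j, rfl⟩ : ∃ j, t = j + 1 := ⟨t - 1, by omega⟩
          have hj : j < L.length := by omega
          have hkj : k ≤ j := by omega
          have hvjS : (L[j]'hj).2 ∉ S := by
            rcases eq_or_lt_of_le hkj with h | h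
            · exact h ▸ hvkS
            · exact (IH j (by omega) hj (le_of_lt h)).1
          by_cases hX : Xset G L j (L[j]'hj).2 = ∅
          · obtain ⟨j', hj'j, hne, hbtw, hu, harc⟩ := (hstep j ht).2 hX
            have hj'len : j' < L.length := by omega
            by_cases hj'S : (L[j']'hj'len).2 ∈ S
            · -- backtracking into S is impossible: apply crux with B = j
              exfalso
              have hj'k : j' < k := by
                by_contra h
                push_neg at h
                exact (IH j' (by omega) hj'len h).1 hj'S
              apply crux j hkj
              · intro i hi hki hiB
                have h1 := IH i (by omega) hi (le_of_lt hki)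
                exact ⟨h1.2 hki, h1.1⟩
              · intro m hm hkm hmB f hf hmem
                have hXm : Xset G L j (L[m]'hm).2 = ∅ := by
                  rcases eq_or_lt_of_le hmB with h | h
                  · subst h; exact hX
                  · exact hbtw m (by omega) h
                have hnotin : f ∉ Xset G L j (L[m]'hm).2 := by
                  rw [hXm]; exact Set.notMem_empty f
                simp only [Xset, Set.mem_setOf_eq] at hnotin
                push_neg at hnotin
                obtain ⟨i, hi, hij, hfe⟩ := hnotin hf hmem
                exact ⟨i, hi, hij, hfe⟩
            · have hu1 : (L[j + 1]'ht).1 ∉ S := by rw [hu]; exact hj'S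
              exact ⟨fun hvS => hu1 (henter (j + 1) ht hvS), fun _ => hu1⟩
          · obtain ⟨hu, harc⟩ := (hstep j ht).1 hX
            have hu1 : (L[j + 1]'ht).1 ∉ S := by rw [hu]; exact hvjS
            exact ⟨fun hvS => hu1 (henter (j + 1) ht hvS), fun _ => hu1⟩
    -- final contradiction with B = L.length
    apply crux L.length (le_of_lt hk)
    · intro i hi hki _
      have h1 := hmain i hi (le_of_lt hki)
      exact ⟨h1.2 hki, h1.1⟩
    · intro m hm hkm hmB f hf _
      obtain ⟨i, hi, hfe⟩ := hcover f hf
      exact ⟨i, hi, le_of_lt hi, hfe⟩
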